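/- arXiv:1807.06397 — 6 statements merged into one kernel-verified Lean document; each statement's English description precedes it below -/
import Mathlib

section
/- Let K_n = (V,E) be the complete graph on n ≥ 2 vertices, and let ρ : E → {red, green} be an edge coloring such that at least |E|/3 edges are colored red and at least |E|/3 edges are colored green. Then there exist at least n/100 vertices v ∈ V such that at least n/100 edges incident to v are colored red and at least n/100 edges incident to v are colored green. -/
/-!
For a color class `R` with at least a third of the edges, let `P` be the set of vertices of
`R`-degree below `n/100`. Every edge of `R` either meets `P`, and there are at most
`|P| n/100` of those, or lies inside the complement of `P`, and there are at most
`binom(n - |P|, 2)` of those. Hence `n(n-1)/6 ≤ |P| n/100 + (n - |P|)(n - |P| - 1)/2`, which forces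
`|P| ≤ 4n/9`. Doing this for both colors leaves at least `n/9` vertices outside both low-degree
sets.
-/

open Finset

theorem card_le_card_filter_not_add_card_filter_not_add_card_filter_and {α : Type*}
    [DecidableEq α] (s : Finset α) (p q : α → Prop) [DecidablePred p] [DecidablePred q] :
    #s ≤ #{a ∈ s | ¬p a} + #{a ∈ s | ¬q a} + #{a ∈ s | p a ∧ q a} := by
  rw [← card_filter_add_card_filter_not (fun a => p a ∧ q a), add_comm]
  gcongr
  simp only [not_and_or, filter_or]
  exact card_union_le _ _

theorem nine_mul_le_four_mul_of_density {n p x r d t : ℕ} (hn : 2 ≤ n) (hpx : p + x = n)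
    (hr : n * (n - 1) ≤ 6 * r) (hrdt : r ≤ d + t) (hd : 100 * d ≤ p * n)
    (ht : 2 * t ≤ x * (x - 1)) : 9 * p ≤ 4 * n := by
  rw [Nat.mul_sub_one] at hr ht
  have hr' : n * n ≤ 6 * r + n := by omega
  have ht' : 2 * t + x ≤ x * x := by have := Nat.le_mul_self x; omega
  by_contra! hp
  zify at *
  -- `9x ≤ 5n - 1` gives `81 x (x - 1) ≤ (5n - 1)(5n - 10)`, too small for the density.
  nlinarith [mul_nonneg (by omega : (0 : ℤ) ≤ 5 * n - 1 - 9 * x)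
    (by omega : (0 : ℤ) ≤ 5 * n + 9 * x - 10)]

section

variable {V : Type*} [Fintype V] [DecidableEq V]

theorem two_mul_card_not_isDiag :
    2 * #{e : Sym2 V | ¬e.IsDiag} = Fintype.card V * (Fintype.card V - 1) := by
  rw [← Fintype.card_subtype, Sym2.card_subtype_not_diag, Nat.choose_two_right,
    Nat.mul_div_cancel' (Nat.even_mul_pred_self _).two_dvd]

theorem card_le_sum_card_mem_add_choose_two {R : Finset (Sym2 V)} (hR : ∀ e ∈ R, ¬e.IsDiag)
    (P : Finset V) : #R ≤ ∑ v ∈ P, #{e ∈ R | v ∈ e} + (#Pᶜ).choose 2 := by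
  have hcover :
      R ⊆ P.biUnion (fun v => {e ∈ R | v ∈ e}) ∪ Pᶜ.offDiag.image Sym2.mk.uncurry := by
    intro e he
    induction e using Sym2.ind with
    | _ a b =>
      by_cases ha : a ∈ P
      · exact mem_union_left _ (mem_biUnion.2 ⟨a, ha, mem_filter.2 ⟨he, Sym2.mem_mk_left a b⟩⟩)
      by_cases hb : b ∈ P
      · exact mem_union_left _ (mem_biUnion.2 ⟨b, hb, mem_filter.2 ⟨he, Sym2.mem_mk_right a b⟩⟩)
      have hab : a ≠ b := by simpa using hR _ he
      exact mem_union_right _ (mem_image.2 ⟨(a, b), by simp [ha, hb, hab], rfl⟩)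
  calc #R ≤ #(P.biUnion fun v => {e ∈ R | v ∈ e}) + #(Pᶜ.offDiag.image Sym2.mk.uncurry) :=
        (card_le_card hcover).trans (card_union_le _ _)
    _ ≤ ∑ v ∈ P, #{e ∈ R | v ∈ e} + (#Pᶜ).choose 2 := by
        rw [Sym2.card_image_offDiag]
        exact Nat.add_le_add_right card_biUnion_le _

theorem nine_mul_card_low_degree_le {R : Finset (Sym2 V)} (hR : ∀ e ∈ R, ¬e.IsDiag)
    (hV : 2 ≤ Fintype.card V)
    (hdense : Fintype.card V * (Fintype.card V - 1) ≤ 6 * #R) :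
    9 * #{v | 100 * #{e ∈ R | v ∈ e} < Fintype.card V} ≤ 4 * Fintype.card V := by
  set P : Finset V := {v | 100 * #{e ∈ R | v ∈ e} < Fintype.card V}
  have hdeg : 100 * ∑ v ∈ P, #{e ∈ R | v ∈ e} ≤ #P * Fintype.card V := by
    rw [mul_sum, ← smul_eq_mul, ← sum_const]
    exact sum_le_sum fun v hv => (mem_filter.1 hv).2.le
  refine nine_mul_le_four_mul_of_density hV (card_add_card_compl P) hdense
    (card_le_sum_card_mem_add_choose_two hR P) hdeg ?_
  rw [Nat.choose_two_right, Nat.mul_div_cancel' (Nat.even_mul_pred_self _).two_dvd]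

end

/-- if a 2-coloring (`true` = red, `false` = green) of the edges
of the complete graph on `n ≥ 2` vertices colors at least `|E|/3` edges red and
at least `|E|/3` edges green, then there are at least `n/100` vertices `v` with
at least `n/100` red edges incident to `v` and at least `n/100` green edges
incident to `v`. -/
theorem many_bichromatic_vertices (n : ℕ) (hn : 2 ≤ n)
    (ρ : Sym2 (Fin n) → Bool)
    (E : Finset (Sym2 (Fin n)))
    (hE : E = Finset.univ.filter (fun e => ¬ e.IsDiag))
    (hred : E.card ≤ 3 * (E.filter (fun e => ρ e = true)).card)
    (hgreen : E.card ≤ 3 * (E.filter (fun e => ρ e = false)).card) :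
    n ≤ 100 * (Finset.univ.filter (fun v : Fin n =>
      n ≤ 100 * (E.filter (fun e => v ∈ e ∧ ρ e = true)).card ∧
      n ≤ 100 * (E.filter (fun e => v ∈ e ∧ ρ e = false)).card)).card := by
  have hEcard : 2 * #E = n * (n - 1) := by
    simpa [hE] using two_mul_card_not_isDiag (V := Fin n)
  have hlow (c : Bool) (hc : #E ≤ 3 * #{e ∈ E | ρ e = c}) :
      9 * #{v | ¬n ≤ 100 * #{e ∈ E | v ∈ e ∧ ρ e = c}} ≤ 4 * n := by
    have hdiag : ∀ e ∈ {e ∈ E | ρ e = c}, ¬e.IsDiag := fun e he => by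
      simpa [hE] using (mem_filter.1 he).1
    simpa [filter_filter, and_comm] using
      nine_mul_card_low_degree_le hdiag (by rwa [Fintype.card_fin]) (by rw [Fintype.card_fin]; omega)
  have hsplit := card_le_card_filter_not_add_card_filter_not_add_card_filter_and univ
    (fun v => n ≤ 100 * #{e ∈ E | v ∈ e ∧ ρ e = true})
    (fun v => n ≤ 100 * #{e ∈ E | v ∈ e ∧ ρ e = false})
  rw [card_univ, Fintype.card_fin] at hsplit
  have := hlow true hred
  have := hlow false hgreen
  omega
end

section
/- Let n ≥ 2 and suppose in the complete graph K_n there are at least n/100 vertices each incident to at least n/100 red edges and at least n/100 green edges, under an edge 2-coloring ρ. Then there exist at least n/200 pairwise vertex-disjoint triangles in K_n each of which contains at least one red edge and at least one green edge. -/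
/-!
Take a packing `T` of vertex-disjoint triangles with edges of both colours that has maximum
size and, among those, meets the set `S` of vertices of high red and high green degree least
often; let `U` be the set of vertices it covers. If `|T| < n/200`, both colour degrees of every
vertex of `S` exceed `2|T|`. A vertex outside `U` has all its neighbours of one colour in `U`,
since otherwise it spans a new triangle. Two vertices of `S \ U` are then blocked in the same
colour, so by counting some triangle of `T` contains distinct such neighbours of both, and it can
be traded for two new triangles through fresh vertices; hence `|S \ U| ≤ 1`. Trading a triangle
of `T` for one through a fresh vertex outside `S` shows that each triangle meets `S` at most
twice and, if `S \ U = {a}`, that a triangle inside the blocked neighbourhood of `a` meets `S`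
at most once. So `|S| ≤ 2|T| < n/100`.
-/

open Finset

variable {V : Type*}

def IsMixedTriangle (ρ : Sym2 V → Bool) (t : Finset V) : Prop :=
  t.card = 3 ∧ (∃ a ∈ t, ∃ b ∈ t, a ≠ b ∧ ρ s(a, b) = true) ∧
    (∃ a ∈ t, ∃ b ∈ t, a ≠ b ∧ ρ s(a, b) = false)

def IsMixedPacking (ρ : Sym2 V → Bool) (T : Finset (Finset V)) : Prop :=
  (∀ t ∈ T, IsMixedTriangle ρ t) ∧ (T : Set (Finset V)).PairwiseDisjoint id

variable {ρ : Sym2 V → Bool} {S t : Finset V} {T : Finset (Finset V)}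

theorem IsMixedPacking.subset {T' : Finset (Finset V)} (hT : IsMixedPacking ρ T) (h : T' ⊆ T) :
    IsMixedPacking ρ T' :=
  ⟨fun t ht => hT.1 t (h ht), hT.2.subset (coe_subset.mpr h)⟩

theorem card_add_card_le_of_forall_eq {A B : Finset V} (ht : 2 ≤ t.card) (hA : A ⊆ t)
    (hB : B ⊆ t) (h : ∀ u ∈ A, ∀ u' ∈ B, u = u') : A.card + B.card ≤ t.card := by
  rcases A.eq_empty_or_nonempty with rfl | ⟨u, hu⟩
  · simpa using card_le_card hB
  rcases B.eq_empty_or_nonempty with rfl | ⟨u', hu'⟩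
  · simpa using card_le_card hA
  have : A.card ≤ 1 := card_le_one.mpr fun x hx y hy => (h x hx u' hu').trans (h y hy u' hu').symm
  have : B.card ≤ 1 := card_le_one.mpr fun x hx y hy => (h u hu x hx).symm.trans (h u hu y hy)
  omega

variable [DecidableEq V]

theorem isMixedTriangle_of_color_ne {a b c : V} (hab : a ≠ b) (hac : a ≠ c)
    (h : ρ s(a, b) ≠ ρ s(a, c)) : IsMixedTriangle ρ {a, b, c} := by
  have hbc : b ≠ c := by rintro rfl; exact h rfl
  refine ⟨card_eq_three.mpr ⟨a, b, c, hab, hac, hbc, rfl⟩, ?_⟩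
  cases hb : ρ s(a, b)
  · have hc : ρ s(a, c) = true := by simpa [hb] using h.symm
    exact ⟨⟨a, by simp, c, by simp, hac, hc⟩, a, by simp, b, by simp, hab, hb⟩
  · have hc : ρ s(a, c) = false := by simpa [hb] using h.symm
    exact ⟨⟨a, by simp, b, by simp, hab, hb⟩, a, by simp, c, by simp, hac, hc⟩

theorem IsMixedTriangle.exists_isMixedTriangle_insert (ht : IsMixedTriangle ρ t) {z : V}
    (hz : z ∉ t) : ∃ p ∈ t, ∃ q ∈ t, IsMixedTriangle ρ {p, q, z} := by
  obtain ⟨-, ⟨x, hx, y, hy, hxy, hr⟩, ⟨x', hx', y', hy', hxy', hg⟩⟩ := ht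
  have hne : ∀ w ∈ t, w ≠ z := fun w hw h => hz (h ▸ hw)
  cases hxz : ρ s(x, z)
  · exact ⟨x, hx, y, hy, isMixedTriangle_of_color_ne hxy (hne x hx) (by simp [hr, hxz])⟩
  cases hx'z : ρ s(x', z)
  · -- neither the red edge `xy` nor the green edge `x'y'` extends by `z`: use `zx` and `zx'`
    refine ⟨x, hx, x', hx', ?_⟩
    rw [pair_comm x' z, insert_comm x z]
    refine isMixedTriangle_of_color_ne (hne x hx).symm (hne x' hx').symm ?_
    rw [Sym2.eq_swap, hxz, Sym2.eq_swap, hx'z]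
    decide
  · exact ⟨x', hx', y', hy', isMixedTriangle_of_color_ne hxy' (hne x' hx') (by simp [hg, hx'z])⟩

theorem notMem_of_disjoint_biUnion (ht : t.Nonempty) (h : Disjoint t (T.biUnion id)) : t ∉ T :=
  fun hm => ht.ne_empty (disjoint_self.mp (h.mono_right (subset_biUnion_of_mem id hm)))

theorem IsMixedPacking.insert (hT : IsMixedPacking ρ T) (ht : IsMixedTriangle ρ t)
    (h : Disjoint t (T.biUnion id)) : IsMixedPacking ρ (insert t T) := by
  refine ⟨forall_mem_insert _ _ _ |>.mpr ⟨ht, hT.1⟩, ?_⟩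
  rw [coe_insert]
  exact hT.2.insert fun t' ht' _ => h.mono_right (subset_biUnion_of_mem id ht')

theorem IsMixedPacking.biUnion_erase (hT : IsMixedPacking ρ T) (ht : t ∈ T) :
    (T.erase t).biUnion id = T.biUnion id \ t := by
  ext x
  simp only [mem_biUnion, mem_erase, mem_sdiff, id]
  constructor
  · rintro ⟨t', ⟨hne, ht'⟩, hx⟩
    exact ⟨⟨t', ht', hx⟩, disjoint_left.mp (hT.2 ht' ht hne) hx⟩
  · rintro ⟨⟨t', ht', hx⟩, hxt⟩
    exact ⟨t', ⟨fun h => hxt (h ▸ hx), ht'⟩, hx⟩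

theorem IsMixedPacking.card_inter_biUnion (hT : IsMixedPacking ρ T) (X : Finset V) :
    (X ∩ T.biUnion id).card = ∑ t ∈ T, (X ∩ t).card := by
  rw [inter_biUnion]
  exact Finset.card_biUnion (hT.2.mono fun t => inter_subset_right)

theorem IsMixedPacking.card_biUnion (hT : IsMixedPacking ρ T) :
    (T.biUnion id).card = 3 * T.card := by
  rw [Finset.card_biUnion hT.2, mul_comm, ← smul_eq_mul, ← sum_const]
  exact sum_congr rfl fun t ht => (hT.1 t ht).1

theorem IsMixedPacking.card_inter_biUnion_le (hT : IsMixedPacking ρ T) {X : Finset V} {k : ℕ}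
    (h : ∀ t ∈ T, (X ∩ t).card ≤ k) : (X ∩ T.biUnion id).card ≤ k * T.card := by
  rw [hT.card_inter_biUnion, mul_comm]
  exact sum_le_card_nsmul T _ k h

theorem IsMixedPacking.exists_subset_of_card_lt (hT : IsMixedPacking ρ T) {X : Finset V}
    (hX : X ⊆ T.biUnion id) (h : 2 * T.card < X.card) : ∃ t ∈ T, t ⊆ X := by
  by_contra! hsub
  have : (X ∩ T.biUnion id).card ≤ 2 * T.card := hT.card_inter_biUnion_le fun t ht => by
    have := card_lt_card (ssubset_of_subset_of_ne inter_subset_right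
      fun he => hsub t ht (inter_eq_right.mp he))
    rw [(hT.1 t ht).1] at this
    omega
  rw [inter_eq_left.mpr hX] at this
  omega

theorem IsMixedPacking.card_add_card_le (hT : IsMixedPacking ρ T) {X Y : Finset V}
    (hX : X ⊆ T.biUnion id) (hY : Y ⊆ T.biUnion id)
    (h : ∀ t ∈ T, ∀ u ∈ X ∩ t, ∀ u' ∈ Y ∩ t, u = u') : X.card + Y.card ≤ 3 * T.card := by
  rw [← inter_eq_left.mpr hX, ← inter_eq_left.mpr hY, hT.card_inter_biUnion,
    hT.card_inter_biUnion, ← sum_add_distrib, mul_comm]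
  refine sum_le_card_nsmul T _ 3 fun t ht => ?_
  rw [← (hT.1 t ht).1]
  exact card_add_card_le_of_forall_eq (by rw [(hT.1 t ht).1]; norm_num) inter_subset_right
    inter_subset_right (h t ht)

structure IsOptimalPacking (ρ : Sym2 V → Bool) (S : Finset V) (T : Finset (Finset V)) : Prop where
  isMixedPacking : IsMixedPacking ρ T
  card_le : ∀ T', IsMixedPacking ρ T' → T'.card ≤ T.card
  card_inter_le : ∀ T', IsMixedPacking ρ T' → T'.card = T.card →
    (S ∩ T.biUnion id).card ≤ (S ∩ T'.biUnion id).card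

theorem IsOptimalPacking.card_inter_le_of_exchange (hT : IsOptimalPacking ρ S T)
    {t' : Finset V} (ht : t ∈ T) (ht' : IsMixedTriangle ρ t')
    (hsub : ∀ x ∈ t', x ∈ t ∨ x ∉ T.biUnion id) : (S ∩ t).card ≤ (S ∩ t').card := by
  have hP := hT.isMixedPacking
  have hdisj : Disjoint t' ((T.erase t).biUnion id) := by
    rw [hP.biUnion_erase ht, disjoint_left]
    intro x hx hxU
    rcases hsub x hx with h | h
    exacts [(mem_sdiff.mp hxU).2 h, h (mem_sdiff.mp hxU).1]
  have hnew : t' ∉ T.erase t :=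
    notMem_of_disjoint_biUnion (card_pos.mp (by rw [ht'.1]; norm_num)) hdisj
  have hP' := (hP.subset (erase_subset t T)).insert ht' hdisj
  have hmin := hT.card_inter_le _ hP'
    (by rw [card_insert_of_notMem hnew, card_erase_add_one ht])
  rw [hP.card_inter_biUnion, hP'.card_inter_biUnion, sum_insert hnew, ← add_sum_erase T _ ht]
    at hmin
  omega

theorem IsOptimalPacking.not_disjoint_of_exchange (hT : IsOptimalPacking ρ S T)
    {t₁ t₂ : Finset V} (ht : t ∈ T) (ht₁ : IsMixedTriangle ρ t₁) (ht₂ : IsMixedTriangle ρ t₂)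
    (h₁ : Disjoint t₁ (T.biUnion id \ t)) (h₂ : Disjoint t₂ (T.biUnion id \ t)) :
    ¬ Disjoint t₁ t₂ := by
  intro h₁₂
  have hP := hT.isMixedPacking
  have hne {s : Finset V} (hs : IsMixedTriangle ρ s) : s.Nonempty :=
    card_pos.mp (by rw [hs.1]; norm_num)
  rw [← hP.biUnion_erase ht] at h₁ h₂
  have hP₂ := (hP.subset (erase_subset t T)).insert ht₂ h₂
  have h₁' : Disjoint t₁ ((insert t₂ (T.erase t)).biUnion id) := by
    rw [biUnion_insert]
    exact disjoint_union_right.mpr ⟨h₁₂, h₁⟩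
  have := hT.card_le _ (hP₂.insert ht₁ h₁')
  rw [card_insert_of_notMem (notMem_of_disjoint_biUnion (hne ht₁) h₁'),
    card_insert_of_notMem (notMem_of_disjoint_biUnion (hne ht₂) h₂), card_erase_add_one ht]
    at this
  omega

variable [Fintype V]

def colorNbhd (ρ : Sym2 V → Bool) (c : Bool) (v : V) : Finset V :=
  {w | w ≠ v ∧ ρ s(v, w) = c}

theorem mem_colorNbhd {c : Bool} {v w : V} :
    w ∈ colorNbhd ρ c v ↔ w ≠ v ∧ ρ s(v, w) = c := by
  simp [colorNbhd]

theorem card_filter_mem_eq_card_colorNbhd (ρ : Sym2 V → Bool) (c : Bool) (v : V) :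
    (({e | ¬e.IsDiag} : Finset (Sym2 V)).filter fun e => v ∈ e ∧ ρ e = c).card =
      (colorNbhd ρ c v).card := by
  rw [← card_image_of_injective (f := fun w => s(v, w)) (colorNbhd ρ c v)
    fun _ _ h => Sym2.congr_right.mp h]
  refine congrArg card (ext fun e => ?_)
  simp only [mem_filter, mem_univ, true_and, mem_image, mem_colorNbhd]
  constructor
  · rintro ⟨hd, hv, hc⟩
    refine ⟨Sym2.Mem.other hv, ⟨Sym2.other_ne hd hv, ?_⟩, Sym2.other_spec hv⟩
    rwa [Sym2.other_spec hv]
  · rintro ⟨w, ⟨hw, hc⟩, rfl⟩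
    exact ⟨by simpa using hw.symm, Sym2.mem_mk_left v w, hc⟩

theorem color_eq_not_of_notMem_colorNbhd {c : Bool} {v w : V} (h : w ∉ colorNbhd ρ c v)
    (hw : w ≠ v) : ρ s(v, w) = !c := by
  simp only [mem_colorNbhd, hw, ne_eq, not_false_eq_true, true_and] at h
  cases c <;> simpa using h

theorem eq_of_colorNbhd_subset {X : Finset V} {a a' : V} {c c' : Bool} (hne : a ≠ a')
    (ha : a ∉ X) (ha' : a' ∉ X) (h : colorNbhd ρ c a ⊆ X) (h' : colorNbhd ρ c' a' ⊆ X) :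
    c = c' := by
  have e := color_eq_not_of_notMem_colorNbhd (fun hm => ha' (h hm)) hne.symm
  have e' := color_eq_not_of_notMem_colorNbhd (fun hm => ha (h' hm)) hne
  rw [Sym2.eq_swap, e] at e'
  exact Bool.not_inj e'

theorem isMixedTriangle_of_mem_colorNbhd {X : Finset V} {c : Bool} {a u z : V}
    (hc : colorNbhd ρ c a ⊆ X) (hu : u ∈ colorNbhd ρ c a) (hz : z ∉ X) (hza : z ≠ a) :
    IsMixedTriangle ρ {a, u, z} := by
  refine isMixedTriangle_of_color_ne (mem_colorNbhd.mp hu).1.symm hza.symm ?_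
  rw [(mem_colorNbhd.mp hu).2, color_eq_not_of_notMem_colorNbhd (fun h => hz (hc h)) hza]
  cases c <;> decide

theorem IsMixedPacking.exists_notMem_biUnion_of_card_sdiff_le_one (hT : IsMixedPacking ρ T)
    (hS : (S \ T.biUnion id).card ≤ 1) (hV : 3 * T.card + 2 ≤ Fintype.card V) :
    ∃ z, z ∉ T.biUnion id ∧ z ∉ S := by
  have : (T.biUnion id ∪ S).card < (univ : Finset V).card := by
    rw [← union_sdiff_self_eq_union, card_univ]
    have := card_union_le (T.biUnion id) (S \ T.biUnion id)
    rw [hT.card_biUnion] at this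
    omega
  obtain ⟨z, -, hz⟩ := exists_mem_notMem_of_card_lt_card this
  exact ⟨z, fun h => hz (mem_union_left _ h), fun h => hz (mem_union_right _ h)⟩

theorem exists_isOptimalPacking (ρ : Sym2 V → Bool) (S : Finset V) :
    ∃ T, IsOptimalPacking ρ S T := by
  classical
  let P : Finset (Finset (Finset V)) := {T | IsMixedPacking ρ T}
  have hP : P.Nonempty := ⟨∅, mem_filter.mpr ⟨mem_univ _, by simp [IsMixedPacking]⟩⟩
  obtain ⟨T₀, hT₀, hmax⟩ := exists_max_image P card hP
  obtain ⟨T, hT, hmin⟩ := exists_min_image (P.filter (·.card = T₀.card))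
    (fun T => (S ∩ T.biUnion id).card) ⟨T₀, mem_filter.mpr ⟨hT₀, rfl⟩⟩
  simp only [mem_filter, P, mem_univ, true_and] at hT hmax hmin
  exact ⟨T, hT.1, fun T' h => (hmax T' h).trans hT.2.ge,
    fun T' h hc => hmin T' ⟨h, hc.trans hT.2⟩⟩

theorem IsOptimalPacking.exists_colorNbhd_subset (hT : IsOptimalPacking ρ S T) {a : V}
    (ha : a ∉ T.biUnion id) : ∃ c, colorNbhd ρ c a ⊆ T.biUnion id := by
  by_contra! h
  obtain ⟨r, hr, hrU⟩ := not_subset.mp (h true)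
  obtain ⟨g, hg, hgU⟩ := not_subset.mp (h false)
  rw [mem_colorNbhd] at hr hg
  have hmix : IsMixedTriangle ρ {a, r, g} :=
    isMixedTriangle_of_color_ne hr.1.symm hg.1.symm (by simp [hr.2, hg.2])
  have hdisj : Disjoint {a, r, g} (T.biUnion id) := by
    simp [disjoint_insert_left, ha, hrU, hgU]
  have := hT.card_le _ (hT.isMixedPacking.insert hmix hdisj)
  rw [card_insert_of_notMem (notMem_of_disjoint_biUnion (insert_nonempty _ _) hdisj)] at this
  omega

theorem IsOptimalPacking.eq_of_mem_colorNbhd (hT : IsOptimalPacking ρ S T) (ht : t ∈ T)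
    {a a' u u' : V} {c : Bool} (hne : a ≠ a') (ha : a ∉ T.biUnion id)
    (ha' : a' ∉ T.biUnion id) (hc : colorNbhd ρ c a ⊆ T.biUnion id)
    (hc' : colorNbhd ρ c a' ⊆ T.biUnion id) (hu : u ∈ colorNbhd ρ c a ∩ t)
    (hu' : u' ∈ colorNbhd ρ c a' ∩ t) (hV : 3 * T.card + 4 ≤ Fintype.card V) : u = u' := by
  by_contra huu'
  set U := T.biUnion id
  obtain ⟨z, hz, z', hz', hzz'⟩ : ∃ z ∉ U ∪ {a, a'}, ∃ z' ∉ U ∪ {a, a'}, z ≠ z' := by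
    have hU : U.card = 3 * T.card := hT.isMixedPacking.card_biUnion
    have := card_union_le U {a, a'}
    have := card_le_two (a := a) (b := a')
    obtain ⟨z, hz, z', hz', h⟩ := one_lt_card.mp (show 1 < (U ∪ {a, a'})ᶜ.card by
      rw [card_compl]; omega)
    exact ⟨z, mem_compl.mp hz, z', mem_compl.mp hz', h⟩
  simp only [mem_union, mem_insert, mem_singleton, not_or] at hz hz'
  obtain ⟨hzU, hza, hza'⟩ := hz
  obtain ⟨hz'U, hz'a, hz'a'⟩ := hz'
  obtain ⟨hu, hut⟩ := mem_inter.mp hu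
  obtain ⟨hu', hu't⟩ := mem_inter.mp hu'
  have huU : u ∈ U := hc hu
  have hu'U : u' ∈ U := hc' hu'
  refine hT.not_disjoint_of_exchange ht (isMixedTriangle_of_mem_colorNbhd hc hu hzU hza)
    (isMixedTriangle_of_mem_colorNbhd hc' hu' hz'U hz'a') ?_ ?_ ?_
  · simp only [disjoint_insert_left, disjoint_singleton_left, mem_sdiff, not_and, not_not]
    exact ⟨fun h => absurd h ha, fun _ => hut, fun h => absurd h hzU⟩
  · simp only [disjoint_insert_left, disjoint_singleton_left, mem_sdiff, not_and, not_not]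
    exact ⟨fun h => absurd h ha', fun _ => hu't, fun h => absurd h hz'U⟩
  · simp [hne.symm, Ne.symm huu', hzz'.symm, Ne.symm hza', hz'a,
      (ne_of_mem_of_not_mem huU ha').symm, (ne_of_mem_of_not_mem huU hz'U).symm,
      ne_of_mem_of_not_mem hu'U ha, ne_of_mem_of_not_mem hu'U hzU]

theorem IsOptimalPacking.card_sdiff_le_one (hT : IsOptimalPacking ρ S T)
    (hdeg : ∀ a ∈ S, ∀ c, 2 * T.card < (colorNbhd ρ c a).card)
    (hV : T.Nonempty → 3 * T.card + 4 ≤ Fintype.card V) : (S \ T.biUnion id).card ≤ 1 := by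
  refine card_le_one.mpr fun a ha a' ha' => ?_
  rw [mem_sdiff] at ha ha'
  by_contra hne
  obtain ⟨c, hc⟩ := hT.exists_colorNbhd_subset ha.2
  obtain ⟨c', hc'⟩ := hT.exists_colorNbhd_subset ha'.2
  obtain rfl := eq_of_colorNbhd_subset hne ha.2 ha'.2 hc hc'
  have := hT.isMixedPacking.card_add_card_le hc hc' fun t ht u hu u' hu' =>
    hT.eq_of_mem_colorNbhd ht hne ha.2 ha'.2 hc hc' hu hu' (hV ⟨t, ht⟩)
  have := hdeg a ha.1 c
  have := hdeg a' ha'.1 c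
  omega

theorem IsOptimalPacking.card_inter_le_two (hT : IsOptimalPacking ρ S T)
    (hS : (S \ T.biUnion id).card ≤ 1) (hV : T.Nonempty → 3 * T.card + 4 ≤ Fintype.card V)
    (ht : t ∈ T) : (S ∩ t).card ≤ 2 := by
  obtain ⟨z, hzU, hzS⟩ := hT.isMixedPacking.exists_notMem_biUnion_of_card_sdiff_le_one hS
    (by have := hV ⟨t, ht⟩; omega)
  have hzt : z ∉ t := fun h => hzU (subset_biUnion_of_mem id ht h)
  obtain ⟨p, hp, q, hq, hmix⟩ := (hT.isMixedPacking.1 t ht).exists_isMixedTriangle_insert hzt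
  have hle := hT.card_inter_le_of_exchange ht hmix (by
    simp only [mem_insert, mem_singleton, forall_eq_or_imp, forall_eq]
    exact ⟨.inl hp, .inl hq, .inr hzU⟩)
  have : S ∩ {p, q, z} ⊆ {p, q} := fun x hx => by
    obtain ⟨hxS, hx⟩ := mem_inter.mp hx
    simp only [mem_insert, mem_singleton] at hx ⊢
    rcases hx with rfl | rfl | rfl
    exacts [.inl rfl, .inr rfl, absurd hxS hzS]
  exact hle.trans ((card_le_card this).trans card_le_two)

theorem IsOptimalPacking.card_inter_le_one (hT : IsOptimalPacking ρ S T) (ht : t ∈ T)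
    {a u z : V} {c : Bool} (haS : a ∈ S) (haU : a ∉ T.biUnion id)
    (hc : colorNbhd ρ c a ⊆ T.biUnion id) (hu : u ∈ colorNbhd ρ c a) (hut : u ∈ t)
    (huS : u ∉ S) (hzU : z ∉ T.biUnion id) (hzS : z ∉ S) : (S ∩ t).card ≤ 1 := by
  have hmix := isMixedTriangle_of_mem_colorNbhd hc hu hzU (ne_of_mem_of_not_mem haS hzS).symm
  have hle := hT.card_inter_le_of_exchange ht hmix (by
    simp only [mem_insert, mem_singleton, forall_eq_or_imp, forall_eq]
    exact ⟨.inr haU, .inl hut, .inr hzU⟩)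
  have : S ∩ {a, u, z} ⊆ {a} := fun x hx => by
    obtain ⟨hxS, hx⟩ := mem_inter.mp hx
    simp only [mem_insert, mem_singleton] at hx ⊢
    rcases hx with rfl | rfl | rfl
    exacts [rfl, absurd hxS huS, absurd hxS hzS]
  exact hle.trans ((card_le_card this).trans (card_singleton a).le)

theorem IsOptimalPacking.card_le_two_mul (hT : IsOptimalPacking ρ S T)
    (hdeg : ∀ a ∈ S, ∀ c, 2 * T.card < (colorNbhd ρ c a).card)
    (hV : T.Nonempty → 3 * T.card + 4 ≤ Fintype.card V) : S.card ≤ 2 * T.card := by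
  have hP := hT.isMixedPacking
  have hS := hT.card_sdiff_le_one hdeg hV
  have hS2 {t} (ht : t ∈ T) := hT.card_inter_le_two hS hV ht
  rw [← card_sdiff_add_card_inter S (T.biUnion id), hP.card_inter_biUnion]
  rcases (S \ T.biUnion id).eq_empty_or_nonempty with hemp | ⟨a, ha⟩
  · rw [hemp, card_empty, zero_add, mul_comm]
    exact sum_le_card_nsmul T _ 2 fun t ht => hS2 ht
  obtain ⟨haS, haU⟩ := mem_sdiff.mp ha
  obtain ⟨c, hc⟩ := hT.exists_colorNbhd_subset haU
  obtain ⟨t, ht, htN⟩ := hP.exists_subset_of_card_lt hc (hdeg a haS c)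
  obtain ⟨u, hut, huS⟩ : ∃ u ∈ t, u ∉ S := by
    by_contra! h
    have := hS2 ht
    rw [inter_eq_right.mpr h, (hP.1 t ht).1] at this
    omega
  obtain ⟨z, hzU, hzS⟩ := hP.exists_notMem_biUnion_of_card_sdiff_le_one hS
    (by have := hV ⟨t, ht⟩; omega)
  have ht1 := hT.card_inter_le_one ht haS haU hc (htN hut) hut huS hzU hzS
  have : ∑ t ∈ T, (S ∩ t).card < ∑ _t ∈ T, 2 :=
    sum_lt_sum (fun t ht => hS2 ht) ⟨t, ht, by omega⟩
  rw [sum_const, smul_eq_mul] at this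
  omega

theorem disjoint_bichromatic_triangles_general (n : ℕ)
    (ρ : Sym2 (Fin n) → Bool)
    (E : Finset (Sym2 (Fin n)))
    (hE : E = Finset.univ.filter (fun e => ¬ e.IsDiag))
    (hvert : n ≤ 100 * (Finset.univ.filter (fun v : Fin n =>
      n ≤ 100 * (E.filter (fun e => v ∈ e ∧ ρ e = true)).card ∧
      n ≤ 100 * (E.filter (fun e => v ∈ e ∧ ρ e = false)).card)).card) :
    ∃ T : Finset (Finset (Fin n)),
      (∀ t ∈ T, t.card = 3) ∧
      ((T : Set (Finset (Fin n))).Pairwise fun t t' => Disjoint t t') ∧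
      (∀ t ∈ T,
        (∃ a ∈ t, ∃ b ∈ t, a ≠ b ∧ ρ s(a, b) = true) ∧
        (∃ a ∈ t, ∃ b ∈ t, a ≠ b ∧ ρ s(a, b) = false)) ∧
      n ≤ 200 * T.card := by
  subst hE
  simp only [card_filter_mem_eq_card_colorNbhd] at hvert
  obtain ⟨T, hT⟩ := exists_isOptimalPacking ρ
    {v | n ≤ 100 * (colorNbhd ρ true v).card ∧ n ≤ 100 * (colorNbhd ρ false v).card}
  obtain ⟨hmix, hdisj⟩ := hT.isMixedPacking
  refine ⟨T, fun t ht => (hmix t ht).1, hdisj, fun t ht => (hmix t ht).2, ?_⟩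
  by_contra! hlt
  have hS := hT.card_le_two_mul (fun a ha c => by
      rw [mem_filter] at ha
      cases c <;> omega)
    (fun hne => by have := hne.card_pos; rw [Fintype.card_fin]; omega)
  omega

/-- if in a 2-edge-coloring (`true` = red, `false` = green) of
the complete graph on `n ≥ 2` vertices at least `n/100` vertices are incident
to at least `n/100` red edges and at least `n/100` green edges, then there are
at least `n/200` pairwise vertex-disjoint triangles each containing at least
one red edge and at least one green edge. -/
theorem disjoint_bichromatic_triangles (n : ℕ) (hn : 2 ≤ n)
    (ρ : Sym2 (Fin n) → Bool)
    (E : Finset (Sym2 (Fin n)))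
    (hE : E = Finset.univ.filter (fun e => ¬ e.IsDiag))
    (hvert : n ≤ 100 * (Finset.univ.filter (fun v : Fin n =>
      n ≤ 100 * (E.filter (fun e => v ∈ e ∧ ρ e = true)).card ∧
      n ≤ 100 * (E.filter (fun e => v ∈ e ∧ ρ e = false)).card)).card) :
    ∃ T : Finset (Finset (Fin n)),
      (∀ t ∈ T, t.card = 3) ∧
      ((T : Set (Finset (Fin n))).Pairwise fun t t' => Disjoint t t') ∧
      (∀ t ∈ T,
        (∃ a ∈ t, ∃ b ∈ t, a ≠ b ∧ ρ s(a, b) = true) ∧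
        (∃ a ∈ t, ∃ b ∈ t, a ≠ b ∧ ρ s(a, b) = false)) ∧
      n ≤ 200 * T.card :=
  disjoint_bichromatic_triangles_general n ρ E hE hvert
end

section
/- Define a circuit over subsets of [n]: C_{[n]} = ⊤; for S ⊊ [n], C_S = ⋁_{i ∈ [n]∖S} C_{i,S} where C_{i,S} = (⋀_{j ∈ [n]∖S, j ≠ i} x_{i,j}) ∧ C_{S ∪ {i}} (with x_{i,j} denoting ¬x_{j,i} when j < i). Then the circuit rooted at C_∅ is decomposable: for every S, the subcircuit rooted at C_S mentions only variables x_{i,j} with both i, j ∈ [n]∖S. -/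
/-- Boolean formulas/circuits in negation normal form (as trees):
constants, literals (variable with polarity), binary conjunction and
disjunction. -/
inductive NNF (V : Type*) where
  | tru
  | fls
  | lit (v : V) (b : Bool)
  | conj (a b : NNF V)
  | disj (a b : NNF V)

namespace NNF

variable {V : Type*}

/-- Evaluation of an NNF circuit under an assignment. -/
def eval (α : V → Bool) : NNF V → Bool
  | tru => true
  | fls => false
  | lit v b => α v == b
  | conj a b => eval α a && eval α b
  | disj a b => eval α a || eval α b

variable [DecidableEq V]

/-- The set of variables mentioned by an NNF circuit. -/
def vars : NNF V → Finset V
  | tru => ∅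
  | fls => ∅
  | lit v _ => {v}
  | conj a b => vars a ∪ vars b
  | disj a b => vars a ∪ vars b

/-- Decomposability: the conjuncts of every conjunction mention disjoint sets
of variables. -/
def Decomposable : NNF V → Prop
  | tru => True
  | fls => True
  | lit _ _ => True
  | conj a b => Disjoint (vars a) (vars b) ∧ Decomposable a ∧ Decomposable b
  | disj a b => Decomposable a ∧ Decomposable b

end NNF

/-- The variables `x_{i,j}` for `1 ≤ i < j ≤ n` of the function `lin_n`. -/
abbrev Vars (n : ℕ) := {p : Fin n × Fin n // p.1 < p.2}

/-- The literal `x_{i,j}`, where for `j < i` this denotes `¬ x_{j,i}`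
(and which is unused for `i = j`). -/
def litx {n : ℕ} (i j : Fin n) : NNF (Vars n) :=
  if h : i < j then .lit ⟨(i, j), h⟩ true
  else if h' : j < i then .lit ⟨(j, i), h'⟩ false
  else .tru

/-- `C` satisfies the defining equations of the circuit from the paper:
`C_{[n]} = ⊤` and, for `S ⊊ [n]`,
`C_S = ⋁_{i ∉ S} ((⋀_{j ∉ S, j ≠ i} x_{i,j}) ∧ C_{S ∪ {i}})`. -/
def IsLinCircuit (n : ℕ) (C : Finset (Fin n) → NNF (Vars n)) : Prop :=
  C Finset.univ = .tru ∧
  ∀ S : Finset (Fin n), S ≠ Finset.univ →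
    C S = (Sᶜ.toList.map (fun i =>
      (Sᶜ.erase i).toList.foldr (fun j acc => NNF.conj (litx i j) acc)
        (C (insert i S)))).foldr NNF.disj NNF.fls

namespace NNF

lemma decomp_foldr_disj {V : Type*} [DecidableEq V] (L : List (NNF V))
    (h : ∀ a ∈ L, a.Decomposable) : (L.foldr disj fls).Decomposable := by
  induction L with
  | nil => trivial
  | cons a L ih =>
    exact ⟨h a (by simp), ih fun b hb => h b (by simp [hb])⟩

lemma mem_vars_foldr_disj {V : Type*} [DecidableEq V] {p : V} {L : List (NNF V)}
    (h : p ∈ (L.foldr disj fls).vars) : ∃ a ∈ L, p ∈ a.vars := by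
  induction L with
  | nil => simp [vars] at h
  | cons a L ih =>
    simp only [List.foldr, vars, Finset.mem_union] at h
    rcases h with h | h
    · exact ⟨a, by simp, h⟩
    · obtain ⟨b, hb, hp⟩ := ih h
      exact ⟨b, by simp [hb], hp⟩

end NNF

lemma vars_litx {n : ℕ} (i j : Fin n) {p : Vars n} (hp : p ∈ (litx i j).vars) :
    (p.1.1 = i ∧ p.1.2 = j) ∨ (p.1.1 = j ∧ p.1.2 = i) := by
  unfold litx at hp
  split_ifs at hp <;> simp [NNF.vars] at hp <;> subst hp <;> simp

lemma litx_decomp {n : ℕ} (i j : Fin n) : (litx i j).Decomposable := by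
  unfold litx; split_ifs <;> trivial

lemma inner_lemma {n : ℕ} (i : Fin n) (B : NNF (Vars n)) (L : List (Fin n))
    (hnd : L.Nodup) (hi : i ∉ L)
    (hBd : B.Decomposable) (hBv : ∀ p ∈ B.vars, p.1.1 ≠ i ∧ p.1.2 ≠ i) :
    (L.foldr (fun j acc => NNF.conj (litx i j) acc) B).Decomposable ∧
    ∀ p ∈ (L.foldr (fun j acc => NNF.conj (litx i j) acc) B).vars,
      (p.1.1 = i ∧ p.1.2 ∈ L) ∨ (p.1.2 = i ∧ p.1.1 ∈ L) ∨ p ∈ B.vars := by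
  induction L with
  | nil => exact ⟨hBd, fun p hp => Or.inr (Or.inr hp)⟩
  | cons j L ih =>
    have hjL : j ∉ L := (List.nodup_cons.mp hnd).1
    have hnd' : L.Nodup := (List.nodup_cons.mp hnd).2
    have hij : i ≠ j := by intro h; exact hi (by simp [h])
    have hiL : i ∉ L := fun h => hi (List.mem_cons_of_mem _ h)
    obtain ⟨ihd, ihv⟩ := ih hnd' hiL
    refine ⟨⟨?_, litx_decomp i j, ihd⟩, ?_⟩
    · rw [Finset.disjoint_left]
      intro p hp hp'
      rcases vars_litx i j hp with ⟨h1, h2⟩ | ⟨h1, h2⟩ <;>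
        rcases ihv p hp' with ⟨a1, a2⟩ | ⟨a1, a2⟩ | hB
      · exact hjL (h2 ▸ a2)
      · exact hij (h2 ▸ a1).symm
      · exact (hBv p hB).1 h1
      · exact hij (h1 ▸ a1).symm
      · exact hjL (h1 ▸ a2)
      · exact (hBv p hB).2 h2
    · intro p hp
      simp only [List.foldr, NNF.vars, Finset.mem_union] at hp
      rcases hp with hp | hp
      · rcases vars_litx i j hp with ⟨h1, h2⟩ | ⟨h1, h2⟩
        · exact Or.inl ⟨h1, by simp [h2]⟩
        · exact Or.inr (Or.inl ⟨h2, by simp [h1]⟩)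
      · rcases ihv p hp with ⟨a1, a2⟩ | ⟨a1, a2⟩ | hB
        · exact Or.inl ⟨a1, by simp [a2]⟩
        · exact Or.inr (Or.inl ⟨a1, by simp [a2]⟩)
        · exact Or.inr (Or.inr hB)

/-- the circuit `C_∅` defined by `C_{[n]} = ⊤` and
`C_S = ⋁_{i ∉ S} ((⋀_{j ∉ S, j ≠ i} x_{i,j}) ∧ C_{S ∪ {i}})` is decomposable;
indeed for every `S` the subcircuit `C_S` mentions only variables `x_{i,j}`
with `i, j ∈ [n] ∖ S`. -/
theorem lin_circuit_decomposable (n : ℕ) (C : Finset (Fin n) → NNF (Vars n))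
    (hC : IsLinCircuit n C) :
    ∀ S : Finset (Fin n),
      (C S).Decomposable ∧
      ∀ p ∈ (C S).vars, p.1.1 ∉ S ∧ p.1.2 ∉ S := by
  obtain ⟨htop, heq⟩ := hC
  suffices h : ∀ k (S : Finset (Fin n)), Sᶜ.card ≤ k →
      (C S).Decomposable ∧ ∀ p ∈ (C S).vars, p.1.1 ∉ S ∧ p.1.2 ∉ S by
    intro S; exact h Sᶜ.card S le_rfl
  intro k
  induction k with
  | zero =>
    intro S hS
    have hSu : S = Finset.univ := by
      have : Sᶜ = ∅ := Finset.card_eq_zero.mp (Nat.le_zero.mp hS)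
      rwa [Finset.compl_eq_empty_iff] at this
    subst hSu; rw [htop]; exact ⟨trivial, by simp [NNF.vars]⟩
  | succ k ih =>
    intro S hS
    by_cases hu : S = Finset.univ
    · subst hu; rw [htop]; exact ⟨trivial, by simp [NNF.vars]⟩
    rw [heq S hu]
    have key : ∀ i ∈ Sᶜ,
        ((Sᶜ.erase i).toList.foldr (fun j acc => NNF.conj (litx i j) acc)
          (C (insert i S))).Decomposable ∧
        ∀ p ∈ ((Sᶜ.erase i).toList.foldr (fun j acc => NNF.conj (litx i j) acc)
          (C (insert i S))).vars, p.1.1 ∉ S ∧ p.1.2 ∉ S := by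
      intro i hiS
      have hcard : (insert i S)ᶜ.card ≤ k := by
        rw [Finset.compl_insert, Finset.card_erase_of_mem hiS]
        omega
      obtain ⟨hBd, hBv⟩ := ih (insert i S) hcard
      have hBv' : ∀ p ∈ (C (insert i S)).vars, p.1.1 ≠ i ∧ p.1.2 ≠ i := by
        intro p hp
        obtain ⟨h1, h2⟩ := hBv p hp
        exact ⟨fun h => h1 (h ▸ Finset.mem_insert_self i S),
               fun h => h2 (h ▸ Finset.mem_insert_self i S)⟩
      obtain ⟨hd, hv⟩ := inner_lemma i (C (insert i S)) (Sᶜ.erase i).toList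
        (Finset.nodup_toList _)
        (by simp [Finset.mem_toList]) hBd hBv'
      refine ⟨hd, fun p hp => ?_⟩
      have hiSn : i ∉ S := Finset.mem_compl.mp hiS
      rcases hv p hp with ⟨a1, a2⟩ | ⟨a1, a2⟩ | hB
      · rw [Finset.mem_toList, Finset.mem_erase, Finset.mem_compl] at a2
        exact ⟨a1 ▸ hiSn, a2.2⟩
      · rw [Finset.mem_toList, Finset.mem_erase, Finset.mem_compl] at a2
        exact ⟨a2.2, a1 ▸ hiSn⟩
      · obtain ⟨h1, h2⟩ := hBv p hB
        exact ⟨fun h => h1 (Finset.mem_insert_of_mem h),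
               fun h => h2 (Finset.mem_insert_of_mem h)⟩
    constructor
    · apply NNF.decomp_foldr_disj
      intro a ha
      obtain ⟨i, hi, rfl⟩ := List.mem_map.mp ha
      exact (key i (Finset.mem_toList.mp hi)).1
    · intro p hp
      obtain ⟨a, ha, hpa⟩ := NNF.mem_vars_foldr_disj hp
      obtain ⟨i, hi, rfl⟩ := List.mem_map.mp ha
      exact (key i (Finset.mem_toList.mp hi)).2 p hpa
end

section
/- The circuit C_∅ defined by C_{[n]} = ⊤, C_S = ⋁_{i ∉ S} C_{i,S}, and C_{i,S} = (⋀_{j ∉ S, j ≠ i} x_{i,j}) ∧ C_{S ∪ {i}} (where x_{i,j} for i > j denotes ¬x_{j,i}) is satisfied by an assignment α to {x_{i,j} : 1 ≤ i < j ≤ n} if and only if α is a model of lin_n, i.e., the relation i ≺ j ⟺ (i < j and α(x_{i,j}) = 1) or (i > j and α(x_{j,i}) = 0) is a linear order on {1,...,n}. -/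
/-- A linear order on `Fin n`, encoded as a Boolean relation that is
irreflexive, transitive, and complete (total on distinct elements). -/
def IsLinOrder {n : ℕ} (r : Fin n → Fin n → Bool) : Prop :=
  (∀ a, r a a = false) ∧
  (∀ a b c, r a b = true → r b c = true → r a c = true) ∧
  (∀ a b, a ≠ b → r a b = true ∨ r b a = true)

/-- The relation induced by an assignment `α`:
`i ≺ j` iff (`i < j` and `α x_{i,j} = 1`) or (`i > j` and `α x_{j,i} = 0`). -/
def relOf {n : ℕ} (α : Vars n → Bool) (i j : Fin n) : Bool :=
  if h : i < j then α ⟨(i, j), h⟩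
  else if h' : j < i then !(α ⟨(j, i), h'⟩)
  else false

section Aux

variable {n : ℕ} (α : Vars n → Bool)

lemma relOf_irrefl (a : Fin n) : relOf α a a = false := by
  simp [relOf]

lemma relOf_asymm {a b : Fin n} (h : a ≠ b) : relOf α a b = !(relOf α b a) := by
  rcases lt_trichotomy a b with h1 | h1 | h1
  · simp [relOf, h1, not_lt.mpr h1.le]
  · exact absurd h1 h
  · simp [relOf, h1, not_lt.mpr h1.le]

lemma eval_litx {i j : Fin n} (h : i ≠ j) : (litx i j).eval α = relOf α i j := by
  rcases lt_trichotomy i j with h1 | h1 | h1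
  · simp [litx, relOf, h1, NNF.eval]
  · exact absurd h1 h
  · simp [litx, relOf, h1, not_lt.mpr h1.le, NNF.eval]

lemma eval_disj_foldr (l : List (NNF (Vars n))) :
    (l.foldr NNF.disj NNF.fls).eval α = true ↔ ∃ x ∈ l, x.eval α = true := by
  induction l with
  | nil => simp [NNF.eval]
  | cons a l ih => simp [NNF.eval, ih]

lemma eval_conj_foldr (i : Fin n) (l : List (Fin n)) (base : NNF (Vars n)) :
    ((l.foldr (fun j acc => NNF.conj (litx i j) acc) base).eval α = true) ↔
      (∀ j ∈ l, (litx i j).eval α = true) ∧ base.eval α = true := by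
  induction l with
  | nil => simp
  | cons a l ih => simp [NNF.eval, ih]; tauto

lemma step {C : Finset (Fin n) → NNF (Vars n)} (hC : IsLinCircuit n C)
    (S : Finset (Fin n)) (hS : S ≠ Finset.univ) :
    (C S).eval α = true ↔ ∃ i, i ∈ Sᶜ ∧
      (∀ j ∈ Sᶜ, j ≠ i → relOf α i j = true) ∧ (C (insert i S)).eval α = true := by
  rw [hC.2 S hS, eval_disj_foldr]
  constructor
  · rintro ⟨x, hx, hev⟩
    obtain ⟨i, hi, rfl⟩ := List.mem_map.mp hx
    rw [Finset.mem_toList] at hi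
    rw [eval_conj_foldr] at hev
    refine ⟨i, hi, fun j hj hji => ?_, hev.2⟩
    have := hev.1 j (by rw [Finset.mem_toList, Finset.mem_erase]; exact ⟨hji, hj⟩)
    rwa [eval_litx α (Ne.symm hji)] at this
  · rintro ⟨i, hi, hall, hev⟩
    refine ⟨_, List.mem_map.mpr ⟨i, Finset.mem_toList.mpr hi, rfl⟩, ?_⟩
    rw [eval_conj_foldr]
    refine ⟨fun j hj => ?_, hev⟩
    rw [Finset.mem_toList, Finset.mem_erase] at hj
    rw [eval_litx α (Ne.symm hj.1)]
    exact hall j hj.2 hj.1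

lemma exists_min (h : IsLinOrder (relOf α)) (T : Finset (Fin n)) :
    T.Nonempty → ∃ m ∈ T, ∀ j ∈ T, j ≠ m → relOf α m j = true := by
  classical
  induction T using Finset.induction_on with
  | empty => rintro ⟨x, hx⟩; exact absurd hx (Finset.notMem_empty x)
  | @insert a T ha ih =>
    intro _
    rcases T.eq_empty_or_nonempty with rfl | hT
    · exact ⟨a, Finset.mem_insert_self a _, by simp⟩
    · obtain ⟨m, hm, hmin⟩ := ih hT
      have ham : a ≠ m := fun e => ha (e ▸ hm)
      by_cases hr : relOf α a m = true
      · refine ⟨a, Finset.mem_insert_self a _, fun j hj hja => ?_⟩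
        rcases Finset.mem_insert.mp hj with rfl | hj
        · exact absurd rfl hja
        · by_cases hjm : j = m
          · exact hjm ▸ hr
          · exact h.2.1 a m j hr (hmin j hj hjm)
      · have hma : relOf α m a = true := by
          rcases h.2.2 a m ham with h' | h'
          · exact absurd h' hr
          · exact h'
        refine ⟨m, Finset.mem_insert_of_mem hm, fun j hj hjm => ?_⟩
        rcases Finset.mem_insert.mp hj with rfl | hj
        · exact hma
        · exact hmin j hj hjm

lemma compl_insert_card {S : Finset (Fin n)} {i : Fin n} (hi : i ∈ Sᶜ) {k : ℕ}
    (hk : Sᶜ.card ≤ k + 1) : (insert i S)ᶜ.card ≤ k := by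
  rw [Finset.compl_insert, Finset.card_erase_of_mem hi]
  omega

lemma all_true {C : Finset (Fin n) → NNF (Vars n)} (hC : IsLinCircuit n C)
    (h : IsLinOrder (relOf α)) :
    ∀ k (S : Finset (Fin n)), Sᶜ.card ≤ k → (C S).eval α = true := by
  intro k
  induction k with
  | zero =>
    intro S hS
    have : Sᶜ = ∅ := Finset.card_eq_zero.mp (Nat.le_zero.mp hS)
    have hU : S = Finset.univ := by
      rwa [Finset.compl_eq_empty_iff] at this
    rw [hU, hC.1]; rfl
  | succ k ih =>
    intro S hS
    by_cases hU : S = Finset.univ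
    · rw [hU, hC.1]; rfl
    · have hne : Sᶜ.Nonempty := by
        rw [Finset.nonempty_iff_ne_empty, ne_eq, Finset.compl_eq_empty_iff]
        exact hU
      obtain ⟨m, hm, hmin⟩ := exists_min α h Sᶜ hne
      rw [step α hC S hU]
      exact ⟨m, hm, hmin, ih _ (compl_insert_card hm hS)⟩

lemma trans_of_eval {C : Finset (Fin n) → NNF (Vars n)} (hC : IsLinCircuit n C) :
    ∀ k (S : Finset (Fin n)), Sᶜ.card ≤ k → (C S).eval α = true →
      ∀ a b c, a ∈ Sᶜ → b ∈ Sᶜ → c ∈ Sᶜ →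
        relOf α a b = true → relOf α b c = true → relOf α a c = true := by
  intro k
  induction k with
  | zero =>
    intro S hS _ a _ _ ha _ _ _ _
    have : Sᶜ = ∅ := Finset.card_eq_zero.mp (Nat.le_zero.mp hS)
    rw [this] at ha
    exact absurd ha (Finset.notMem_empty a)
  | succ k ih =>
    intro S hS hev a b c ha hb hc hab hbc
    by_cases hU : S = Finset.univ
    · rw [hU, Finset.compl_univ] at ha
      exact absurd ha (Finset.notMem_empty a)
    rw [step α hC S hU] at hev
    obtain ⟨i, hi, hall, hev'⟩ := hev
    have hnab : a ≠ b := by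
      rintro rfl; rw [relOf_irrefl] at hab; exact Bool.false_ne_true hab
    have hnbc : b ≠ c := by
      rintro rfl; rw [relOf_irrefl] at hbc; exact Bool.false_ne_true hbc
    have hnac : a ≠ c := by
      rintro rfl
      rw [relOf_asymm α hnab, hbc] at hab
      simp at hab
    by_cases hai : a = i
    · subst hai; exact hall c hc (Ne.symm hnac)
    by_cases hbi : b = i
    · subst hbi
      have := hall a ha hnab
      rw [relOf_asymm α hnab, this] at hab
      simp at hab
    by_cases hci : c = i
    · subst hci
      have := hall b hb hnbc
      rw [relOf_asymm α hnbc, this] at hbc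
      simp at hbc
    have hmem : ∀ x, x ∈ Sᶜ → x ≠ i → x ∈ (insert i S)ᶜ := by
      intro x hx hxi
      rw [Finset.compl_insert, Finset.mem_erase]
      exact ⟨hxi, hx⟩
    exact ih (insert i S) (compl_insert_card hi hS) hev' a b c
      (hmem a ha hai) (hmem b hb hbi) (hmem c hc hci) hab hbc

end Aux

/-- the circuit `C_∅` defined by `C_{[n]} = ⊤` and
`C_S = ⋁_{i ∉ S} ((⋀_{j ∉ S, j ≠ i} x_{i,j}) ∧ C_{S ∪ {i}})` is satisfied by
an assignment `α` iff `α` is a model of `lin_n`, i.e. iff the induced relation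
`relOf α` is a linear order on `{1, ..., n}`. -/
theorem lin_circuit_correct (n : ℕ) (C : Finset (Fin n) → NNF (Vars n))
    (hC : IsLinCircuit n C) (α : Vars n → Bool) :
    (C ∅).eval α = true ↔ IsLinOrder (relOf α) := by
  constructor
  · intro hev
    refine ⟨relOf_irrefl α, ?_, ?_⟩
    · intro a b c hab hbc
      exact trans_of_eval α hC (∅ᶜ : Finset (Fin n)).card ∅ le_rfl hev a b c
        (by simp) (by simp) (by simp) hab hbc
    · intro a b hab
      rcases lt_trichotomy a b with h1 | h1 | h1
      · by_cases hα : relOf α a b = true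
        · exact Or.inl hα
        · right; rw [relOf_asymm α (Ne.symm hab)]
          simp [Bool.not_eq_true] at hα
          simp [hα]
      · exact absurd h1 hab
      · by_cases hα : relOf α a b = true
        · exact Or.inl hα
        · right; rw [relOf_asymm α (Ne.symm hab)]
          simp [Bool.not_eq_true] at hα
          simp [hα]
  · intro h
    exact all_true α hC h (∅ᶜ : Finset (Fin n)).card ∅ le_rfl
end

section
/- Let n ≥ 2 and let ρ be a 2-coloring of the edges of K_n with at least binom(n,2)/3 red and at least binom(n,2)/3 green edges. Let V_red (resp. V_green) be the set of vertices with more incident red (resp. green) edges. If fewer than n/100 vertices of V_red have at least n/100 incident green edges and fewer than n/100 vertices of V_green have at least n/100 incident red edges, then |V_red| ≤ 3n/4 and |V_green| ≤ 3n/4. -/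
open Finset

private lemma incident_card_le (n : ℕ) (E : Finset (Sym2 (Fin n)))
    (hE : E = Finset.univ.filter (fun e => ¬ e.IsDiag)) (v : Fin n) :
    (E.filter (fun e => v ∈ e)).card ≤ n - 1 := by
  classical
  have hsub : E.filter (fun e => v ∈ e) ⊆ (Finset.univ.erase v).image (fun u => s(v, u)) := by
    intro e he
    rw [hE] at he
    simp only [mem_filter, mem_univ, true_and] at he
    obtain ⟨hnd, hv⟩ := he
    induction e using Sym2.ind with
    | _ a b =>
      rw [Sym2.mem_iff] at hv
      rw [Sym2.isDiag_iff_proj_eq] at hnd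
      rcases hv with rfl | rfl
      · exact mem_image.mpr ⟨b, mem_erase.mpr ⟨fun h => hnd h.symm, mem_univ _⟩, rfl⟩
      · exact mem_image.mpr ⟨a, mem_erase.mpr ⟨hnd, mem_univ _⟩, Sym2.eq_swap.symm⟩
  calc (E.filter (fun e => v ∈ e)).card
      ≤ ((Finset.univ.erase v).image (fun u => s(v, u))).card := card_le_card hsub
    _ ≤ (Finset.univ.erase v).card := card_image_le
    _ = n - 1 := by rw [card_erase_of_mem (mem_univ v), card_univ, Fintype.card_fin]

private lemma degree_sum (n : ℕ) (ρ : Sym2 (Fin n) → Bool) (c : Bool)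
    (E : Finset (Sym2 (Fin n))) (hE : E = Finset.univ.filter (fun e => ¬ e.IsDiag)) :
    ∑ v : Fin n, (E.filter (fun e => v ∈ e ∧ ρ e = c)).card
      = 2 * (E.filter (fun e => ρ e = c)).card := by
  classical
  have h1 : ∀ v : Fin n, E.filter (fun e => v ∈ e ∧ ρ e = c)
      = (E.filter (fun e => ρ e = c)).filter (fun e => v ∈ e) := by
    intro v
    rw [filter_filter]
    exact filter_congr (fun e _ => by tauto)
  simp_rw [h1, card_filter]
  rw [Finset.sum_comm]
  have h2 : ∀ e ∈ E.filter (fun e => ρ e = c),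
      (∑ v : Fin n, if v ∈ e then 1 else 0) = 2 := by
    intro e he
    have hnd : ¬ e.IsDiag := by
      have := (mem_filter.mp he).1
      rw [hE, mem_filter] at this
      exact this.2
    rw [← card_filter]
    induction e using Sym2.ind with
    | _ a b =>
      rw [Sym2.isDiag_iff_proj_eq] at hnd
      have : (Finset.univ.filter (fun v => v ∈ s(a, b))) = ({a, b} : Finset (Fin n)) := by
        ext v
        simp [Sym2.mem_iff]
      rw [this, card_pair hnd]
  rw [Finset.sum_congr rfl h2, Finset.sum_const, smul_eq_mul, mul_comm, Finset.card_filter]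

private lemma one_side_bound (n : ℕ) (hn : 2 ≤ n) (ρ : Sym2 (Fin n) → Bool) (c : Bool)
    (E : Finset (Sym2 (Fin n)))
    (hE : E = Finset.univ.filter (fun e => ¬ e.IsDiag))
    (deg : Fin n → ℕ)
    (hdeg : ∀ v, deg v = (E.filter (fun e => v ∈ e ∧ ρ e = c)).card)
    (h3 : E.card ≤ 3 * (E.filter (fun e => ρ e = c)).card)
    (Vr Vg : Finset (Fin n))
    (hpart : Vr ∪ Vg = Finset.univ) (hdisj : Disjoint Vr Vg)
    (hfew : 100 * (Vr.filter (fun v => n ≤ 100 * deg v)).card < n) :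
    4 * Vr.card ≤ 3 * n := by
  classical
  -- edge count
  have hEcard : 2 * E.card = n * (n - 1) := by
    have h1 : E.card = (Fintype.card (Fin n)).choose 2 := by
      rw [hE, ← Fintype.card_subtype, Sym2.card_subtype_not_diag]
    rw [h1, Fintype.card_fin, Nat.choose_two_right]
    have hdvd : 2 ∣ n * (n - 1) := by
      rcases Nat.even_or_odd n with h | h
      · exact Dvd.dvd.mul_right h.two_dvd _
      · exact Dvd.dvd.mul_left (Nat.Odd.sub_odd h odd_one).two_dvd _
    omega
  -- degree bound
  have hdeg_le : ∀ v, deg v ≤ n - 1 := by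
    intro v
    rw [hdeg v]
    refine le_trans (card_le_card ?_) (incident_card_le n E hE v)
    intro e he
    rw [mem_filter] at he ⊢
    exact ⟨he.1, he.2.1⟩
  -- degree sum
  have hsum : ∑ v : Fin n, deg v = 2 * (E.filter (fun e => ρ e = c)).card := by
    simp_rw [hdeg]; exact degree_sum n ρ c E hE
  -- split the sum over Vr ∪ Vg
  have hsplit : ∑ v : Fin n, deg v = ∑ v ∈ Vr, deg v + ∑ v ∈ Vg, deg v := by
    rw [← Finset.sum_union hdisj, hpart]
  -- bound for Vg
  have hVgsum : ∑ v ∈ Vg, deg v ≤ Vg.card * (n - 1) := by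
    calc ∑ v ∈ Vg, deg v ≤ Vg.card • (n - 1) :=
          Finset.sum_le_card_nsmul _ _ _ (fun v _ => hdeg_le v)
      _ = Vg.card * (n - 1) := smul_eq_mul ..
  -- bound for Vr
  have hVrsum : 100 * ∑ v ∈ Vr, deg v ≤ (n - 1) * (n - 1) + n * (n - 1) := by
    have hsplit2 := Finset.sum_filter_add_sum_filter_not Vr (fun v => n ≤ 100 * deg v) deg
    have hB : ∑ v ∈ Vr.filter (fun v => n ≤ 100 * deg v), deg v
        ≤ (Vr.filter (fun v => n ≤ 100 * deg v)).card * (n - 1) := by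
      calc _ ≤ (Vr.filter (fun v => n ≤ 100 * deg v)).card • (n - 1) :=
            Finset.sum_le_card_nsmul _ _ _ (fun v _ => hdeg_le v)
        _ = _ := smul_eq_mul ..
    have hR : 100 * ∑ v ∈ Vr.filter (fun v => ¬ n ≤ 100 * deg v), deg v
        ≤ (Vr.filter (fun v => ¬ n ≤ 100 * deg v)).card * (n - 1) := by
      rw [Finset.mul_sum]
      calc _ ≤ (Vr.filter (fun v => ¬ n ≤ 100 * deg v)).card • (n - 1) := by
            refine Finset.sum_le_card_nsmul _ _ _ (fun v hv => ?_)
            have := (mem_filter.mp hv).2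
            omega
        _ = _ := smul_eq_mul ..
    have hBcard : 100 * (Vr.filter (fun v => n ≤ 100 * deg v)).card ≤ n - 1 := by omega
    have hRcard : (Vr.filter (fun v => ¬ n ≤ 100 * deg v)).card ≤ n := by
      calc _ ≤ Vr.card := card_le_card (filter_subset _ _)
        _ ≤ n := by simpa using card_le_card (subset_univ Vr)
    calc 100 * ∑ v ∈ Vr, deg v
        = 100 * ∑ v ∈ Vr.filter (fun v => n ≤ 100 * deg v), deg v
          + 100 * ∑ v ∈ Vr.filter (fun v => ¬ n ≤ 100 * deg v), deg v := by
          rw [← Nat.mul_add, hsplit2]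
      _ ≤ (n - 1) * (n - 1) + n * (n - 1) := by
          have h1 : 100 * ∑ v ∈ Vr.filter (fun v => n ≤ 100 * deg v), deg v
              ≤ (n - 1) * (n - 1) := by
            calc 100 * ∑ v ∈ Vr.filter (fun v => n ≤ 100 * deg v), deg v
                ≤ 100 * ((Vr.filter (fun v => n ≤ 100 * deg v)).card * (n - 1)) :=
                  Nat.mul_le_mul_left _ hB
              _ = (100 * (Vr.filter (fun v => n ≤ 100 * deg v)).card) * (n - 1) := by ring
              _ ≤ (n - 1) * (n - 1) := Nat.mul_le_mul_right _ hBcard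
          have h2 : 100 * ∑ v ∈ Vr.filter (fun v => ¬ n ≤ 100 * deg v), deg v
              ≤ n * (n - 1) := le_trans hR (Nat.mul_le_mul_right _ hRcard)
          omega
  -- cardinalities
  have hcards : Vr.card + Vg.card = n := by
    rw [← card_union_of_disjoint hdisj, hpart, card_univ, Fintype.card_fin]
  -- main chain
  have hmain : 100 * n * (n - 1) ≤ (3 * (n - 1) + 3 * n + 300 * Vg.card) * (n - 1) := by
    have c1 : 100 * (n * (n - 1)) ≤ 300 * ∑ v : Fin n, deg v := by
      rw [hsum]; omega
    have c2 : 300 * ∑ v : Fin n, deg v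
        ≤ 3 * ((n - 1) * (n - 1) + n * (n - 1)) + 300 * (Vg.card * (n - 1)) := by
      rw [hsplit]
      omega
    calc 100 * n * (n - 1) = 100 * (n * (n - 1)) := by ring
      _ ≤ 3 * ((n - 1) * (n - 1) + n * (n - 1)) + 300 * (Vg.card * (n - 1)) :=
          le_trans c1 c2
      _ = (3 * (n - 1) + 3 * n + 300 * Vg.card) * (n - 1) := by ring
  have hfinal : 100 * n ≤ 3 * (n - 1) + 3 * n + 300 * Vg.card :=
    Nat.le_of_mul_le_mul_right hmain (by omega)
  omega

/-- let `ρ` (`true` = red, `false` = green) be a 2-coloring of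
the edges of the complete graph on `n ≥ 2` vertices with at least `|E|/3` red
and at least `|E|/3` green edges.  Let `(V_red, V_green)` be a partition of
the vertices such that every vertex of `V_red` has at least as many incident
red edges as green ones and vice versa for `V_green` (majority color, ties
broken arbitrarily).  If fewer than `n/100` vertices of `V_red` have at least
`n/100` incident green edges, and fewer than `n/100` vertices of `V_green`
have at least `n/100` incident red edges, then `|V_red| ≤ 3n/4` and
`|V_green| ≤ 3n/4`. -/
theorem majority_color_classes_bound (n : ℕ) (hn : 2 ≤ n)
    (ρ : Sym2 (Fin n) → Bool)
    (E : Finset (Sym2 (Fin n)))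
    (hE : E = Finset.univ.filter (fun e => ¬ e.IsDiag))
    (redDeg greenDeg : Fin n → ℕ)
    (hredDeg : ∀ v, redDeg v = (E.filter (fun e => v ∈ e ∧ ρ e = true)).card)
    (hgreenDeg : ∀ v, greenDeg v = (E.filter (fun e => v ∈ e ∧ ρ e = false)).card)
    (hred : E.card ≤ 3 * (E.filter (fun e => ρ e = true)).card)
    (hgreen : E.card ≤ 3 * (E.filter (fun e => ρ e = false)).card)
    (Vr Vg : Finset (Fin n))
    (hpart : Vr ∪ Vg = Finset.univ) (hdisj : Disjoint Vr Vg)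
    (hVr : ∀ v ∈ Vr, greenDeg v ≤ redDeg v)
    (hVg : ∀ v ∈ Vg, redDeg v ≤ greenDeg v)
    (hfewr : 100 * (Vr.filter (fun v => n ≤ 100 * greenDeg v)).card < n)
    (hfewg : 100 * (Vg.filter (fun v => n ≤ 100 * redDeg v)).card < n) :
    4 * Vr.card ≤ 3 * n ∧ 4 * Vg.card ≤ 3 * n := by
  constructor
  · exact one_side_bound n hn ρ false E hE greenDeg hgreenDeg hgreen Vr Vg hpart hdisj hfewr
  · exact one_side_bound n hn ρ true E hE redDeg hredDeg hred Vg Vr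
      (by rw [Finset.union_comm, hpart]) hdisj.symm hfewg
end

section
/- Let n be a positive integer and let m = ⌈n/100⌉. For any 2-coloring (red/green) of the edges of the complete graph K_n, if there exist at least m vertices v each of which has at least m incident red edges and at least m incident green edges, then there exist at least ⌈n/200⌉ pairwise vertex-disjoint triangles, each containing at least one red edge and at least one green edge. -/
open Finset

private lemma pick_avoid {V : Type*} [DecidableEq V] {D W : Finset V} (h : W.card < D.card) :
    ∃ x ∈ D, x ∉ W := by
  have h2 : (D \ W).Nonempty := by
    rw [← Finset.card_pos]
    have := Finset.le_card_sdiff W D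
    omega
  obtain ⟨x, hx⟩ := h2
  rw [Finset.mem_sdiff] at hx
  exact ⟨x, hx.1, hx.2⟩

private lemma greedy_partner {V : Type*} [DecidableEq V] (D : V → Finset V) (c : ℕ)
    (hD : ∀ v, v ∉ D v) :
    ∀ (vs : List V) (W : Finset V), (∀ v ∈ vs, c ≤ (D v).card) →
      (∀ v ∈ vs, v ∈ W) → W.card + vs.length ≤ c + 1 →
      ∃ bs : List V, bs.length = vs.length ∧ bs.Nodup ∧ (∀ b ∈ bs, b ∉ W) ∧
        ∀ (i : ℕ) (h1 : i < vs.length) (h2 : i < bs.length),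
          bs.get ⟨i, h2⟩ ∈ D (vs.get ⟨i, h1⟩) := by
  intro vs
  induction vs with
  | nil =>
    intro W _ _ _
    exact ⟨[], rfl, List.nodup_nil, by simp, by intro i h1; simp at h1⟩
  | cons v vs ih =>
    intro W hc hW hcard
    have hvW : v ∈ W := hW v (List.mem_cons_self)
    have hpick : ∃ x ∈ D v, x ∉ W.erase v := by
      apply pick_avoid
      have h1 : (W.erase v).card = W.card - 1 := Finset.card_erase_of_mem hvW
      have h2 : c ≤ (D v).card := hc v (List.mem_cons_self)
      have h3 : 1 ≤ W.card := Finset.card_pos.mpr ⟨v, hvW⟩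
      simp only [List.length_cons] at hcard
      omega
    obtain ⟨b, hbD, hbW'⟩ := hpick
    have hbv : b ≠ v := fun h => hD v (h ▸ hbD)
    have hbW : b ∉ W := fun h => hbW' (Finset.mem_erase.mpr ⟨hbv, h⟩)
    obtain ⟨bs, hlen, hnd, hWs, hget⟩ := ih (insert b W)
      (fun u hu => hc u (List.mem_cons_of_mem _ hu))
      (fun u hu => Finset.mem_insert_of_mem (hW u (List.mem_cons_of_mem _ hu)))
      (by
        have := Finset.card_insert_le b W
        simp only [List.length_cons] at hcard
        omega)
    refine ⟨b :: bs, by simp [hlen], ?_, ?_, ?_⟩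
    · refine List.nodup_cons.mpr ⟨?_, hnd⟩
      intro hmem
      exact (hWs b hmem) (Finset.mem_insert_self b W)
    · intro x hx
      rcases List.mem_cons.mp hx with h | h
      · exact h ▸ hbW
      · exact fun hxW => (hWs x h) (Finset.mem_insert_of_mem hxW)
    · intro i h1 h2
      cases i with
      | zero => exact hbD
      | succ j =>
        simp only [List.get_cons_succ]
        exact hget j (by simpa using h1) (by simpa using h2)

private lemma nbr_card_le (n : ℕ) (ρ : Sym2 (Fin n) → Bool) (v : Fin n) (c : Bool) :
    ((Finset.univ.filter (fun e : Sym2 (Fin n) => ¬ e.IsDiag)).filter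
        (fun e => v ∈ e ∧ ρ e = c)).card ≤
      (Finset.univ.filter (fun u : Fin n => u ≠ v ∧ ρ s(v, u) = c)).card := by
  refine le_trans (Finset.card_le_card ?_) (Finset.card_image_le
    (f := fun u => s(v, u)) (s := Finset.univ.filter (fun u : Fin n => u ≠ v ∧ ρ s(v, u) = c)))
  intro e
  induction e using Sym2.ind with
  | _ x y =>
    intro he
    simp only [Finset.mem_filter, Finset.mem_univ, true_and] at he
    obtain ⟨hdiag, hve, hρ⟩ := he
    rw [Sym2.mem_iff] at hve
    rw [Sym2.mk_isDiag_iff] at hdiag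
    rw [Finset.mem_image]
    rcases hve with rfl | rfl
    · refine ⟨y, ?_, rfl⟩
      simp only [Finset.mem_filter, Finset.mem_univ, true_and]
      exact ⟨fun h => hdiag h.symm, hρ⟩
    · refine ⟨x, ?_, ?_⟩
      · simp only [Finset.mem_filter, Finset.mem_univ, true_and]
        refine ⟨fun h => hdiag h, ?_⟩
        rwa [Sym2.eq_swap]
      · rw [Sym2.eq_swap]

private lemma assemble (n : ℕ) (ρ : Sym2 (Fin n) → Bool) (K : ℕ)
    (vs as bs : List (Fin n))
    (hlv : vs.length = K) (hla : as.length = vs.length) (hlb : bs.length = vs.length)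
    (hnv : vs.Nodup) (hna : as.Nodup) (hnb : bs.Nodup)
    (hav : ∀ x ∈ as, x ∉ vs) (hbv : ∀ x ∈ bs, x ∉ vs) (hba : ∀ x ∈ bs, x ∉ as)
    (hcol : ∀ (i : ℕ) (h1 : i < vs.length) (h2 : i < as.length) (h3 : i < bs.length),
      (ρ s(vs.get ⟨i, h1⟩, as.get ⟨i, h2⟩) = true ∧ ρ s(vs.get ⟨i, h1⟩, bs.get ⟨i, h3⟩) = false) ∨
      (ρ s(vs.get ⟨i, h1⟩, as.get ⟨i, h2⟩) = false ∧ ρ s(vs.get ⟨i, h1⟩, bs.get ⟨i, h3⟩) = true)) :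
    ∃ T : Finset (Finset (Fin n)),
      (∀ t ∈ T, t.card = 3) ∧
      ((T : Set (Finset (Fin n))).Pairwise fun t t' => Disjoint t t') ∧
      (∀ t ∈ T,
        (∃ a ∈ t, ∃ b ∈ t, a ≠ b ∧ ρ s(a, b) = true) ∧
        (∃ a ∈ t, ∃ b ∈ t, a ≠ b ∧ ρ s(a, b) = false)) ∧
      K ≤ T.card := by
  subst hlv
  set va : Fin vs.length → Fin n := fun i => vs.get i with hva
  set aa : Fin vs.length → Fin n := fun i => as.get (Fin.cast hla.symm i) with haa
  set ba : Fin vs.length → Fin n := fun i => bs.get (Fin.cast hlb.symm i) with hba2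
  have hVV : ∀ i j, va i = va j → i = j := by
    intro i j h
    exact (List.Nodup.get_inj_iff hnv).mp h
  have hAA : ∀ i j, aa i = aa j → i = j := by
    intro i j h
    have := (List.Nodup.get_inj_iff hna).mp h
    exact Fin.ext (by simpa using congrArg Fin.val this)
  have hBB : ∀ i j, ba i = ba j → i = j := by
    intro i j h
    have := (List.Nodup.get_inj_iff hnb).mp h
    exact Fin.ext (by simpa using congrArg Fin.val this)
  have hvmem : ∀ i, va i ∈ vs := fun i => List.get_mem _ _
  have hamem : ∀ i, aa i ∈ as := fun i => List.get_mem _ _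
  have hbmem : ∀ i, ba i ∈ bs := fun i => List.get_mem _ _
  have hVA : ∀ i j, va i ≠ aa j := fun i j h => hav (aa j) (hamem j) (h ▸ hvmem i)
  have hVB : ∀ i j, va i ≠ ba j := fun i j h => hbv (ba j) (hbmem j) (h ▸ hvmem i)
  have hAB : ∀ i j, aa i ≠ ba j := fun i j h => hba (ba j) (hbmem j) (h ▸ hamem i)
  set f : Fin vs.length → Finset (Fin n) := fun i => {va i, aa i, ba i} with hf
  have hmemf : ∀ i x, x ∈ f i ↔ x = va i ∨ x = aa i ∨ x = ba i := by
    intro i x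
    simp [hf]
  have hfinj : Function.Injective f := by
    intro i j h
    have h1 : va i ∈ f j := h ▸ (by simp [hf])
    rcases (hmemf j (va i)).mp h1 with h' | h' | h'
    · exact hVV i j h'
    · exact absurd h' (hVA i j)
    · exact absurd h' (hVB i j)
  refine ⟨Finset.image f Finset.univ, ?_, ?_, ?_, ?_⟩
  · intro t ht
    rw [Finset.mem_image] at ht
    obtain ⟨i, -, rfl⟩ := ht
    exact Finset.card_eq_three.mpr ⟨va i, aa i, ba i, hVA i i, hVB i i, hAB i i, rfl⟩
  · intro t ht t' ht' hne
    rw [Finset.mem_coe, Finset.mem_image] at ht ht'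
    obtain ⟨i, -, rfl⟩ := ht
    obtain ⟨j, -, rfl⟩ := ht'
    rw [Finset.disjoint_left]
    intro x hx hx'
    rcases (hmemf i x).mp hx with h | h | h <;>
      rcases (hmemf j x).mp hx' with h' | h' | h'
    · exact hne (congrArg f (hVV i j (h ▸ h')))
    · exact hVA i j (h ▸ h')
    · exact hVB i j (h ▸ h')
    · exact hVA j i (h' ▸ h.symm ▸ rfl) |>.elim
    · exact hne (congrArg f (hAA i j (h ▸ h')))
    · exact hAB i j (h ▸ h')
    · exact hVB j i (h' ▸ h.symm ▸ rfl) |>.elim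
    · exact hAB j i (h' ▸ h.symm ▸ rfl) |>.elim
    · exact hne (congrArg f (hBB i j (h ▸ h')))
  · intro t ht
    rw [Finset.mem_image] at ht
    obtain ⟨i, -, rfl⟩ := ht
    have h2 : (i : ℕ) < as.length := by omega
    have h3 : (i : ℕ) < bs.length := by omega
    have hcc := hcol i i.2 h2 h3
    have hv : vs.get ⟨(i : ℕ), i.2⟩ = va i := rfl
    have ha : as.get ⟨(i : ℕ), h2⟩ = aa i := rfl
    have hb : bs.get ⟨(i : ℕ), h3⟩ = ba i := rfl
    rw [hv, ha, hb] at hcc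
    have hvf : va i ∈ f i := by simp [hf]
    have haf : aa i ∈ f i := by simp [hf]
    have hbf : ba i ∈ f i := by simp [hf]
    rcases hcc with ⟨hr, hg⟩ | ⟨hg, hr⟩
    · exact ⟨⟨va i, hvf, aa i, haf, hVA i i, hr⟩, ⟨va i, hvf, ba i, hbf, hVB i i, hg⟩⟩
    · exact ⟨⟨va i, hvf, ba i, hbf, hVB i i, hr⟩, ⟨va i, hvf, aa i, haf, hVA i i, hg⟩⟩
  · rw [Finset.card_image_of_injective _ hfinj, Finset.card_univ, Fintype.card_fin]

/-- in the complete graph on `n` vertices with an edge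
2-coloring (`true` = red, `false` = green), if at least `m = ⌈n/100⌉` vertices
each have at least `m` incident red edges and at least `m` incident green
edges, then there exist at least `⌈n/200⌉` pairwise vertex-disjoint triangles
each containing at least one red edge and at least one green edge.
(Here `⌈n/100⌉ = (n + 99) / 100` and `⌈n/200⌉ = (n + 199) / 200` with natural
number division.) -/
theorem greedy_disjoint_bichromatic_triangles (n : ℕ) (hn : 2 ≤ n)
    (ρ : Sym2 (Fin n) → Bool)
    (E : Finset (Sym2 (Fin n)))
    (hE : E = Finset.univ.filter (fun e => ¬ e.IsDiag))
    (hvert : (n + 99) / 100 ≤ (Finset.univ.filter (fun v : Fin n =>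
      (n + 99) / 100 ≤ (E.filter (fun e => v ∈ e ∧ ρ e = true)).card ∧
      (n + 99) / 100 ≤ (E.filter (fun e => v ∈ e ∧ ρ e = false)).card)).card) :
    ∃ T : Finset (Finset (Fin n)),
      (∀ t ∈ T, t.card = 3) ∧
      ((T : Set (Finset (Fin n))).Pairwise fun t t' => Disjoint t t') ∧
      (∀ t ∈ T,
        (∃ a ∈ t, ∃ b ∈ t, a ≠ b ∧ ρ s(a, b) = true) ∧
        (∃ a ∈ t, ∃ b ∈ t, a ≠ b ∧ ρ s(a, b) = false)) ∧
      (n + 199) / 200 ≤ T.card := by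
  classical
  subst hE
  set m := (n + 99) / 100 with hm
  set k := (n + 199) / 200 with hk
  set S := Finset.univ.filter (fun v : Fin n =>
      m ≤ ((Finset.univ.filter (fun e : Sym2 (Fin n) => ¬ e.IsDiag)).filter
        (fun e => v ∈ e ∧ ρ e = true)).card ∧
      m ≤ ((Finset.univ.filter (fun e : Sym2 (Fin n) => ¬ e.IsDiag)).filter
        (fun e => v ∈ e ∧ ρ e = false)).card) with hSdef
  set N := fun (v : Fin n) (c : Bool) =>
    Finset.univ.filter (fun u : Fin n => u ≠ v ∧ ρ s(v, u) = c) with hNdef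
  -- good vertices have many neighbours of each colour
  have hgood : ∀ v ∈ S, ∀ c : Bool, m ≤ (N v c).card := by
    intro v hv c
    rw [hSdef, Finset.mem_filter] at hv
    rcases c with _ | _
    · exact le_trans hv.2.2 (nbr_card_le n ρ v false)
    · exact le_trans hv.2.1 (nbr_card_le n ρ v true)
  have hNsum : ∀ v : Fin n, (N v true).card + (N v false).card = n - 1 := by
    intro v
    have h1 : N v true = (Finset.univ.erase v).filter (fun u => ρ s(v, u) = true) := by
      ext u; simp [hNdef, Finset.mem_erase, and_comm]
    have h2 : N v false = (Finset.univ.erase v).filter (fun u => ¬ (ρ s(v, u) = true)) := by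
      ext u; simp [hNdef, Finset.mem_erase, and_comm]
    rw [h1, h2, Finset.card_filter_add_card_filter_not,
      Finset.card_erase_of_mem (Finset.mem_univ v), Finset.card_univ, Fintype.card_fin]
  have hNnot : ∀ (v : Fin n) (c : Bool), v ∉ N v c := by
    intro v c
    simp [hNdef]
  set Dsc := fun v : Fin n =>
    if (N v true).card ≤ (N v false).card then N v true else N v false with hDsc
  set Dab := fun v : Fin n =>
    if (N v true).card ≤ (N v false).card then N v false else N v true with hDab
  have hDscNot : ∀ v, v ∉ Dsc v := by
    intro v
    rw [hDsc]
    dsimp only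
    split <;> exact hNnot v _
  have hDabNot : ∀ v, v ∉ Dab v := by
    intro v
    rw [hDab]
    dsimp only
    split <;> exact hNnot v _
  have hDscCard : ∀ v ∈ S, m ≤ (Dsc v).card := by
    intro v hv
    rw [hDsc]
    dsimp only
    split <;> exact hgood v hv _
  have hDabCard : ∀ v : Fin n, n - 1 ≤ 2 * (Dab v).card := by
    intro v
    have := hNsum v
    rw [hDab]
    dsimp only
    split <;> omega
  have hDscColor : ∀ v x, x ∈ Dsc v → x ≠ v ∧ (ρ s(v, x) = true ∨ ρ s(v, x) = false) := by
    intro v x hx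
    rw [hDsc] at hx
    dsimp only at hx
    split at hx <;> · rw [hNdef, Finset.mem_filter] at hx; exact ⟨hx.2.1, by tauto⟩
  -- the two cases
  by_cases hsmall : n ≤ 200
  · -- k = 1 : a single triangle suffices
    have hk1 : k = 1 := by omega
    have hm1 : 1 ≤ m := by omega
    have hSne : S.Nonempty := Finset.card_pos.mp (by omega)
    obtain ⟨v, hv⟩ := hSne
    have hRne : (N v true).Nonempty := Finset.card_pos.mp (by have := hgood v hv true; omega)
    have hGne : (N v false).Nonempty := Finset.card_pos.mp (by have := hgood v hv false; omega)
    obtain ⟨a, ha⟩ := hRne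
    obtain ⟨b, hb⟩ := hGne
    rw [hNdef, Finset.mem_filter] at ha hb
    obtain ⟨-, hav, hρa⟩ := ha
    obtain ⟨-, hbv, hρb⟩ := hb
    have hab : a ≠ b := by
      intro h
      subst h
      rw [hρa] at hρb
      exact Bool.noConfusion hρb
    obtain ⟨T, hT1, hT2, hT3, hT4⟩ := assemble n ρ 1 [v] [a] [b] rfl rfl rfl
      (List.nodup_singleton v) (List.nodup_singleton a) (List.nodup_singleton b)
      (by simpa using fun h => hav h)
      (by simpa using fun h => hbv h)
      (by simpa using fun h => hab h.symm)
      (by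
        intro i h1 h2 h3
        simp only [List.length_singleton] at h1
        have hi : i = 0 := by omega
        subst hi
        exact Or.inl ⟨hρa, hρb⟩)
    exact ⟨T, hT1, hT2, hT3, by omega⟩
  · -- n ≥ 201 : full greedy construction
    push_neg at hsmall
    have hk1 : 1 ≤ k := by omega
    have h2k : 2 * k ≤ m + 1 := by omega
    have h6k : 6 * k ≤ n + 2 := by omega
    have hkS : k ≤ S.card := le_trans (by omega) hvert
    obtain ⟨S', hS'sub, hS'card⟩ := Finset.exists_subset_card_eq hkS
    set vs := S'.toList with hvs
    have hlenv : vs.length = k := by rw [hvs, Finset.length_toList, hS'card]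
    have hnodv : vs.Nodup := Finset.nodup_toList S'
    have hvsS' : ∀ v ∈ vs, v ∈ S' := fun v h => (Finset.mem_toList).mp h
    have hvsS : ∀ v ∈ vs, v ∈ S := fun v h => hS'sub (hvsS' v h)
    -- choose the scarce partners
    obtain ⟨as, hlena, hnoda, haW, hgeta⟩ := greedy_partner Dsc m hDscNot vs S'
      (fun v hv => hDscCard v (hvsS v hv))
      (fun v hv => hvsS' v hv)
      (by rw [hS'card, hlenv]; omega)
    -- choose the abundant partners
    obtain ⟨bs, hlenb, hnodb, hbW, hgetb⟩ := greedy_partner Dab (3 * k - 1) hDabNot vs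
      (S' ∪ as.toFinset)
      (fun v hv => by have := hDabCard v; omega)
      (fun v hv => Finset.mem_union_left _ (hvsS' v hv))
      (by
        have hu := Finset.card_union_le S' as.toFinset
        have ht := List.toFinset_card_le as
        rw [hlenv]
        rw [hlena, hlenv] at ht
        rw [hS'card] at hu
        omega)
    have haNotVs : ∀ x ∈ as, x ∉ vs := fun x hx hmem => haW x hx (hvsS' x hmem)
    have hbNotVs : ∀ x ∈ bs, x ∉ vs := fun x hx hmem =>
      hbW x hx (Finset.mem_union_left _ (hvsS' x hmem))
    have hbNotAs : ∀ x ∈ bs, x ∉ as := fun x hx hmem =>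
      hbW x hx (Finset.mem_union_right _ (List.mem_toFinset.mpr hmem))
    obtain ⟨T, hT1, hT2, hT3, hT4⟩ := assemble n ρ k vs as bs hlenv hlena hlenb
      hnodv hnoda hnodb haNotVs hbNotVs hbNotAs
      (by
        intro i h1 h2 h3
        have hva := hgeta i h1 (by omega)
        have hvb := hgetb i h1 (by omega)
        set v := vs.get ⟨i, h1⟩ with hvdef
        rw [hDsc] at hva
        rw [hDab] at hvb
        dsimp only at hva hvb
        by_cases hcc : (N v true).card ≤ (N v false).card
        · rw [if_pos hcc] at hva hvb
          rw [hNdef, Finset.mem_filter] at hva hvb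
          exact Or.inl ⟨hva.2.2, hvb.2.2⟩
        · rw [if_neg hcc] at hva hvb
          rw [hNdef, Finset.mem_filter] at hva hvb
          exact Or.inr ⟨hva.2.2, hvb.2.2⟩)
    exact ⟨T, hT1, hT2, hT3, hT4⟩
end
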